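/- G_¬ has sensitive dependence on initial conditions: there exists δ > 0 such that for every X ∈ X and every ε > 0, there exist X′ ∈ X with d(X,X′) < ε and t ∈ ℕ such that d(G_¬^t(X), G_¬^t(X′)) > δ. -/

import Mathlib

noncomputable def de (n : ℕ) (E F : Fin n → Bool) : ℝ :=
  ∑ k : Fin n, if E k = F k then 0 else 1

noncomputable def ds (n : ℕ) (S T : ℕ → Fin n) : ℝ :=
  (9 / (n : ℝ)) * ∑' k : ℕ, |((S k : ℕ) : ℝ) - ((T k : ℕ) : ℝ)| / 10 ^ (k + 1)

noncomputable def dX (n : ℕ) (X Y : (ℕ → Fin n) × (Fin n → Bool)) : ℝ :=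
  de n X.2 Y.2 + ds n X.1 Y.1

def Ff (n : ℕ) (f : (Fin n → Bool) → Fin n → Bool) (i : Fin n) (x : Fin n → Bool) :
    Fin n → Bool :=
  Function.update x i (f x i)

def Gf (n : ℕ) (f : (Fin n → Bool) → Fin n → Bool)
    (X : (ℕ → Fin n) × (Fin n → Bool)) : (ℕ → Fin n) × (Fin n → Bool) :=
  (fun t => X.1 (t + 1), Ff n f (X.1 0) X.2)

def Gneg (n : ℕ) : (ℕ → Fin n) × (Fin n → Bool) → (ℕ → Fin n) × (Fin n → Bool) :=
  Gf n (fun x i => !(x i))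

/-! Perturbing the strategy only at position `m` leaves the orbit's bits untouched up to time `m`;
at time `m + 1` the two orbits update different cells, so they differ in cell `S m` and are at
`de`-distance at least `1`. The perturbation itself costs at most `9 / 10 ^ (m + 1)` in `ds`. -/

section Distances

variable {n : ℕ}

lemma de_self (E : Fin n → Bool) : de n E E = 0 := by
  simp [de]

lemma one_le_de_of_ne {E F : Fin n → Bool} {i : Fin n} (h : E i ≠ F i) : 1 ≤ de n E F := by
  unfold de
  simpa [h] using Finset.single_le_sum (f := fun k => if E k = F k then (0 : ℝ) else 1)
    (fun k _ => by split_ifs <;> norm_num) (Finset.mem_univ i)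

lemma ds_nonneg (S T : ℕ → Fin n) : 0 ≤ ds n S T :=
  mul_nonneg (by positivity) (tsum_nonneg fun _ => by positivity)

lemma ds_update_le (S : ℕ → Fin n) (m : ℕ) (j : Fin n) :
    ds n S (Function.update S m j) ≤ 9 / 10 ^ (m + 1) := by
  have hn : (0 : ℝ) < n := by exact_mod_cast j.pos
  have hdiff : |((S m : ℕ) : ℝ) - ((j : ℕ) : ℝ)| ≤ n :=
    abs_sub_le_of_nonneg_of_le (by positivity) (by exact_mod_cast (S m).isLt.le)
      (by positivity) (by exact_mod_cast j.isLt.le)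
  rw [ds, tsum_eq_single m fun k hk => by simp [Function.update_of_ne hk]]
  simp only [Function.update_self]
  calc 9 / (n : ℝ) * (|((S m : ℕ) : ℝ) - ((j : ℕ) : ℝ)| / 10 ^ (m + 1))
      ≤ 9 / n * (n / 10 ^ (m + 1)) := by gcongr
    _ = 9 / 10 ^ (m + 1) := by field_simp

end Distances

section Orbits

variable {n : ℕ} (f : (Fin n → Bool) → Fin n → Bool)

lemma Gf_iterate_fst (t : ℕ) (X : (ℕ → Fin n) × (Fin n → Bool)) :
    ((Gf n f)^[t] X).1 = fun s => X.1 (s + t) := by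
  induction t generalizing X with
  | zero => rfl
  | succ t ih =>
    rw [Function.iterate_succ_apply, ih]
    funext s
    simp only [Gf, Nat.add_assoc]

lemma Gf_iterate_snd_eq (t : ℕ) {X X' : (ℕ → Fin n) × (Fin n → Bool)} (h₂ : X.2 = X'.2)
    (h₁ : ∀ k < t, X.1 k = X'.1 k) : ((Gf n f)^[t] X).2 = ((Gf n f)^[t] X').2 := by
  induction t generalizing X X' with
  | zero => exact h₂
  | succ t ih =>
    refine ih ?_ fun k hk => h₁ (k + 1) (by omega)
    simp only [Gf, h₂, h₁ 0 t.succ_pos]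

lemma Gf_snd_ne_of_fst_ne (hf : ∀ x i, f x i ≠ x i) {Y Y' : (ℕ → Fin n) × (Fin n → Bool)}
    (h₂ : Y.2 = Y'.2) (h₁ : Y'.1 0 ≠ Y.1 0) :
    (Gf n f Y).2 (Y.1 0) ≠ (Gf n f Y').2 (Y.1 0) := by
  simp only [Gf, Ff, Function.update_self, Function.update_of_ne h₁.symm, ← h₂]
  exact hf _ _

end Orbits

theorem stmt6 (n : ℕ) (hn : 2 ≤ n) :
    ∃ δ > (0 : ℝ), ∀ X : (ℕ → Fin n) × (Fin n → Bool), ∀ ε > (0 : ℝ),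
      ∃ X' : (ℕ → Fin n) × (Fin n → Bool), ∃ t : ℕ,
        dX n X X' < ε ∧ dX n ((Gneg n)^[t] X) ((Gneg n)^[t] X') > δ := by
  refine ⟨1 / 2, by norm_num, fun X ε hε => ?_⟩
  obtain ⟨m, hm⟩ := exists_pow_lt_of_lt_one (show 0 < ε / 9 by positivity)
    (show (1 / 10 : ℝ) < 1 by norm_num)
  have : Nontrivial (Fin n) := Fin.nontrivial_iff_two_le.mpr hn
  obtain ⟨j, hj⟩ := exists_ne (X.1 m)
  set X' := (Function.update X.1 m j, X.2)
  refine ⟨X', m + 1, ?_, ?_⟩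
  · calc dX n X X' ≤ 9 / 10 ^ (m + 1) := by
          simpa [dX, X', de_self] using ds_update_le X.1 m j
      _ ≤ 9 * (1 / 10) ^ m := by
          rw [one_div_pow, ← div_eq_mul_one_div]
          gcongr <;> norm_num
      _ < ε := by linarith
  · have hsnd := Gf_iterate_snd_eq (fun x i => !x i) m (X := X) (X' := X') rfl
      fun k hk => (Function.update_of_ne (by omega) _ _).symm
    have hne := Gf_snd_ne_of_fst_ne (fun x i => !x i) (fun x i => Bool.not_ne_self _) hsnd
      (by simpa [Gf_iterate_fst, X'] using hj)
    simp only [Gf_iterate_fst, X', zero_add] at hne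
    unfold Gneg
    rw [Function.iterate_succ_apply', Function.iterate_succ_apply', dX]
    exact (by norm_num : (1 / 2 : ℝ) < 1).trans_le
      (le_add_of_le_of_nonneg (one_le_de_of_ne hne) (ds_nonneg _ _))
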